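/- arXiv:1706.03755 — 2 statements merged into one kernel-verified Lean document; each statement's English description precedes it below -/
import Mathlib

section
/- For x ≥ 16, ∑_{log⁴x < p ≤ x/2} (log p)/(p · log(x/p)) = O(log log x), where the sum is over primes p. -/
/-! Sort the primes `p ≤ x/2` into dyadic blocks by `j = ⌊log₂ (x/p)⌋ ≥ 1`. On the `j`-th block
`p > x/2^(j+1)` and `log (x/p) ≥ j log 2`, so Chebyshev's bound `θ(x/2^j) ≤ log 4 · x/2^j` caps the
block's contribution at `4/j`. As `j ≤ log₂ x`, the total is at most
`4 (1 + log log₂ x) = O(log log x)`. -/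

open Finset MeasureTheory
open scoped Classical BigOperators

/-- The primes `p ≤ y`. -/
noncomputable def primesUpTo (y : ℝ) : Finset ℕ :=
  (Finset.Icc 1 ⌊y⌋₊).filter Nat.Prime

/-- The truncated Euler product `F_x(s) = ∏_{p ≤ x} (1 + ∑_{k ≥ 1} f(p^k) p^{-ks})`. -/
noncomputable def Fx (f : ℕ → ℂ) (x : ℝ) (s : ℂ) : ℂ :=
  ∏ p ∈ primesUpTo x, (1 + ∑' k : ℕ, f (p ^ (k + 1)) / (p : ℂ) ^ (((k : ℂ) + 1) * s))

/-- `L(x)² = ∑_{|N| ≤ (log x)² + 1} (N²+1)⁻¹ sup_{|t-N| ≤ 1/2} |F_x(1+it)|²`. -/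
noncomputable def Lsq (f : ℕ → ℂ) (x : ℝ) : ℝ :=
  ∑ N ∈ Finset.Icc (-⌊(Real.log x) ^ 2 + 1⌋) ⌊(Real.log x) ^ 2 + 1⌋,
    (1 / ((N : ℝ) ^ 2 + 1)) *
      sSup ((fun t : ℝ => ‖Fx f x (1 + t * Complex.I)‖ ^ 2) ''
        Set.Icc ((N : ℝ) - 1 / 2) ((N : ℝ) + 1 / 2))

/-- The set `P_k` of primes `p` with `(log x)^4 < p ≤ x/2` and
`x^{1-e^{1-k}} < p ≤ x^{1-e^{-k}}`. -/
noncomputable def Pk (x : ℝ) (k : ℕ) : Finset ℕ :=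
  (Finset.Icc 1 ⌊x⌋₊).filter (fun p : ℕ => p.Prime ∧ (Real.log x) ^ 4 < (p : ℝ) ∧
    (p : ℝ) ≤ x / 2 ∧ x ^ (1 - Real.exp (1 - (k : ℝ))) < (p : ℝ) ∧
    (p : ℝ) ≤ x ^ (1 - Real.exp (-(k : ℝ))))

/-- The triple convolution sum `S_k(x)`. -/
noncomputable def Sk (f : ℕ → ℂ) (x : ℝ) (k : ℕ) : ℂ :=
  ∑ p ∈ Pk x k, ∑ q ∈ primesUpTo (x / p), ∑ n ∈ Finset.Icc 1 ⌊x / (p * q)⌋₊,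
    (f p * (Real.log p : ℂ) / (Real.log (x / p) : ℂ)) * f n * f q * (Real.log q : ℂ)

open Real Chebyshev

lemma mem_primesUpTo {y : ℝ} {p : ℕ} : p ∈ primesUpTo y ↔ p.Prime ∧ (p : ℝ) ≤ y := by
  rw [primesUpTo, mem_filter, mem_Icc, and_comm]
  refine and_congr_right fun hp => ?_
  rw [Nat.le_floor_iff' hp.ne_zero, and_iff_right hp.one_le]

lemma theta_eq_sum_primesUpTo (y : ℝ) : θ y = ∑ p ∈ primesUpTo y, log p := by
  rw [theta, primesUpTo, ← Finset.Icc_add_one_left_eq_Ioc, zero_add]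

lemma pow_natLog_floor_le (b : ℕ) {t : ℝ} (ht : 1 ≤ t) : (b : ℝ) ^ Nat.log b ⌊t⌋₊ ≤ t := by
  have hfloor : ⌊t⌋₊ ≠ 0 := Nat.one_le_iff_ne_zero.1 ((Nat.one_le_floor_iff t).2 ht)
  calc (b : ℝ) ^ Nat.log b ⌊t⌋₊ ≤ ⌊t⌋₊ := by exact_mod_cast Nat.pow_log_le_self b hfloor
    _ ≤ t := Nat.floor_le (by linarith)

lemma lt_pow_natLog_floor_succ {b : ℕ} (hb : 1 < b) {t : ℝ} (ht : 0 ≤ t) :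
    t < (b : ℝ) ^ (Nat.log b ⌊t⌋₊ + 1) := by
  exact_mod_cast (Nat.floor_lt ht).1 (Nat.lt_pow_succ_log_self hb _)

lemma dyadic_block_sum_le {x : ℝ} (hx : 0 < x) {j : ℕ} (hj : 1 ≤ j) {s : Finset ℕ}
    (hs : s ⊆ primesUpTo (x / 2 ^ j)) (hlow : ∀ p ∈ s, x / 2 ^ (j + 1) < p) :
    ∑ p ∈ s, log p / (p * log (x / p)) ≤ 4 / j := by
  set c := x / 2 ^ (j + 1) * (j * log 2)
  have hc : 0 < c := by positivity
  have hterm : ∀ p ∈ s, log p / (p * log (x / p)) ≤ log p / c := by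
    intro p hp
    obtain ⟨hprime, hpx⟩ := mem_primesUpTo.1 (hs hp)
    have hp0 : (0 : ℝ) < p := by exact_mod_cast hprime.pos
    have hlog : j * log 2 ≤ log (x / p) := by
      rw [← log_pow]
      exact log_le_log (by positivity) ((le_div_comm₀ hp0 (by positivity)).1 hpx)
    exact div_le_div_of_nonneg_left (log_natCast_nonneg p) hc
      (mul_le_mul (hlow p hp).le hlog (by positivity) hp0.le)
  calc ∑ p ∈ s, log p / (p * log (x / p)) ≤ ∑ p ∈ s, log p / c := sum_le_sum hterm
    _ = (∑ p ∈ s, log p) / c := (sum_div ..).symm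
    _ ≤ θ (x / 2 ^ j) / c := by
        gcongr
        rw [theta_eq_sum_primesUpTo]
        exact sum_le_sum_of_subset_of_nonneg hs fun p _ _ => log_natCast_nonneg p
    _ ≤ log 4 * (x / 2 ^ j) / c := by gcongr; exact theta_le_log4_mul_x (by positivity)
    _ = 4 / j := by
        rw [show (4 : ℝ) = 2 ^ 2 by norm_num, log_pow]
        simp only [c]
        field_simp
        ring

lemma two_le_div_of_mem_primesUpTo_half {x : ℝ} {p : ℕ} (hp : p ∈ primesUpTo (x / 2)) :
    2 ≤ x / p := by
  obtain ⟨hprime, hpx⟩ := mem_primesUpTo.1 hp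
  rw [le_div_comm₀ two_pos (by exact_mod_cast hprime.pos)]
  exact hpx

lemma sum_primesUpTo_half_log_div_mul_log_le {x : ℝ} (hx : 0 < x) :
    ∑ p ∈ primesUpTo (x / 2), log p / (p * log (x / p)) ≤ 4 * (1 + log (Nat.log 2 ⌊x⌋₊)) := by
  set J := Nat.log 2 ⌊x⌋₊
  set g : ℕ → ℕ := fun p => Nat.log 2 ⌊x / p⌋₊
  have hmaps : ∀ p ∈ primesUpTo (x / 2), g p ∈ Icc 1 J := by
    intro p hp
    have hp1 : (1 : ℝ) ≤ p := by exact_mod_cast (mem_primesUpTo.1 hp).1.one_le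
    refine mem_Icc.2 ⟨Nat.le_log_of_pow_le one_lt_two (Nat.le_floor ?_), ?_⟩
    · simpa using two_le_div_of_mem_primesUpTo_half hp
    · exact Nat.log_mono_right (Nat.floor_mono (div_le_self hx.le hp1))
  have hfiber : ∀ j ∈ Icc 1 J,
      ∑ p ∈ primesUpTo (x / 2) with g p = j, log p / (p * log (x / p)) ≤ 4 / j := by
    intro j hj
    refine dyadic_block_sum_le hx (mem_Icc.1 hj).1 (fun p hp => ?_) (fun p hp => ?_)
    all_goals
      obtain ⟨hmem, rfl⟩ := mem_filter.1 hp
      have hp0 : (0 : ℝ) < p := by exact_mod_cast (mem_primesUpTo.1 hmem).1.pos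
      have hxp := two_le_div_of_mem_primesUpTo_half hmem
    · refine mem_primesUpTo.2 ⟨(mem_primesUpTo.1 hmem).1, ?_⟩
      rw [le_div_comm₀ hp0 (by positivity)]
      exact pow_natLog_floor_le 2 (by linarith)
    · rw [div_lt_comm₀ (by positivity) hp0]
      exact lt_pow_natLog_floor_succ one_lt_two (by linarith)
  calc ∑ p ∈ primesUpTo (x / 2), log p / (p * log (x / p))
      = ∑ j ∈ Icc 1 J, ∑ p ∈ primesUpTo (x / 2) with g p = j, log p / (p * log (x / p)) :=
        (sum_fiberwise_of_maps_to hmaps _).symm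
    _ ≤ ∑ j ∈ Icc 1 J, 4 / (j : ℝ) := sum_le_sum hfiber
    _ = 4 * harmonic J := by
        rw [harmonic_eq_sum_Icc]
        push_cast
        rw [mul_sum]
        simp only [div_eq_mul_inv]
    _ ≤ 4 * (1 + log J) := by
        gcongr
        exact harmonic_le_one_add_log J

lemma log_natLog_two_floor_le {x : ℝ} (hx : 8 ≤ x) :
    log (Nat.log 2 ⌊x⌋₊) ≤ 2 * log (log x) := by
  set J := Nat.log 2 ⌊x⌋₊
  have hlog2 := log_two_gt_d9
  have hlogx : 3 * log 2 ≤ log x := by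
    rw [← log_rpow two_pos]
    exact log_le_log (by positivity) (by norm_num; linarith)
  have hJ : 3 ≤ J := Nat.le_log_of_pow_le one_lt_two (Nat.le_floor (by norm_num; linarith))
  have hJlog : J * log 2 ≤ log x := by
    rw [← log_pow]
    exact log_le_log (by positivity) (pow_natLog_floor_le 2 (by linarith))
  have hJsq : (J : ℝ) ≤ log x ^ 2 := by nlinarith
  calc log J ≤ log (log x ^ 2) := log_le_log (by positivity) hJsq
    _ = 2 * log (log x) := by rw [log_pow]; norm_num

theorem stmt3 :
    ∃ C : ℝ, 0 < C ∧ ∀ x : ℝ, 16 ≤ x →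
      ∑ p ∈ (Finset.Icc 1 ⌊x / 2⌋₊).filter
          (fun p : ℕ => p.Prime ∧ (Real.log x) ^ 4 < (p : ℝ)),
        Real.log p / (p * Real.log (x / p)) ≤ C * Real.log (Real.log x) := by
  refine ⟨12, by norm_num, fun x hx => ?_⟩
  have hloglog : 1 ≤ log (log x) := by
    have hlog16 : 4 * log 2 ≤ log x := by
      rw [← log_rpow two_pos]
      exact log_le_log (by positivity) (by norm_num; linarith)
    rw [le_log_iff_exp_le (by linarith [log_two_gt_d9])]
    linarith [exp_one_lt_d9, log_two_gt_d9]
  have hsub : (Icc 1 ⌊x / 2⌋₊).filter (fun p : ℕ => p.Prime ∧ log x ^ 4 < p) ⊆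
      primesUpTo (x / 2) := fun p hp => by
    rw [primesUpTo, mem_filter] at *
    exact ⟨hp.1, hp.2.1⟩
  calc _ ≤ ∑ p ∈ primesUpTo (x / 2), log p / (p * log (x / p)) :=
        sum_le_sum_of_subset_of_nonneg hsub fun p hp _ =>
          div_nonneg (log_natCast_nonneg p) (mul_nonneg (Nat.cast_nonneg p)
            (log_nonneg (by linarith [two_le_div_of_mem_primesUpTo_half hp])))
    _ ≤ 4 * (1 + log (Nat.log 2 ⌊x⌋₊)) := sum_primesUpTo_half_log_div_mul_log_le (by linarith)
    _ ≤ 12 * log (log x) := by linarith [log_natLog_two_floor_le (x := x) (by linarith)]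
end

section
/- Uniformly for all complex sequences (a_p) indexed by primes and all x ≥ 3, ∫_{-1}^{1} |∑_{(log x)^4 ≤ p ≤ x} a_p (log p) p^{-1-it}|² dt ≪ ∑_{(log x)^4 ≤ p ≤ x} |a_p|² (log p)/p, with an absolute implied constant. -/
/-!
Write `b_p = a_p log p / p`. On `[-1, 1]` the weight `1` is at most `e^{1/2} e^{-t²/2}`, and the
Fourier transform of the Gaussian is again Gaussian, so the integral is bounded by
`e^{1/2} √(2π) ∑_{p,q} |b_p| |b_q| e^{-(log q - log p)²/2}`. Schur's test with weights `log q / q`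
reduces this to the bound `∑_q e^{-(log q - log p)²/2} log q / q ≪ 1`, uniformly in `p`: the
summand is at most a multiple of `p / ((q + p)(q + p + 1)) · log q`, which is antitone in `q`, so
partial summation against Chebyshev's bound `θ(y) ≤ y log 4` leaves a telescoping sum.
-/

open Finset MeasureTheory
open scoped Classical BigOperators

open Real

theorem sum_range_mul_le_of_antitone {g c d : ℕ → ℝ} (hg : Antitone g) (hg0 : ∀ n, 0 ≤ g n)
    (hcd : ∀ n, ∑ i ∈ range n, c i ≤ ∑ i ∈ range n, d i) (N : ℕ) :
    ∑ i ∈ range N, g i * c i ≤ ∑ i ∈ range N, g i * d i := by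
  have hS : ∀ n, ∑ i ∈ range n, (c i - d i) ≤ 0 := fun n => by
    rw [sum_sub_distrib]; linarith [hcd n]
  rw [← sub_nonpos, ← sum_sub_distrib]
  simp_rw [← mul_sub]
  have := sum_range_by_parts g (fun i => c i - d i) N
  simp only [smul_eq_mul] at this
  rw [this, sub_nonpos]
  calc g (N - 1) * ∑ i ∈ range N, (c i - d i) ≤ 0 := mul_nonpos_of_nonneg_of_nonpos (hg0 _) (hS N)
    _ ≤ _ := sum_nonneg fun i _ =>
        mul_nonneg_of_nonpos_of_nonpos (sub_nonpos.2 (hg (Nat.le_succ i))) (hS _)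

theorem sum_primesBelow_log_le (n : ℕ) : ∑ q ∈ Nat.primesBelow n, log q ≤ log 4 * n := by
  calc ∑ q ∈ Nat.primesBelow n, log q ≤ ∑ q ∈ Nat.primesLE n, log q :=
        sum_le_sum_of_subset_of_nonneg (Nat.primesBelow_mono n.le_succ)
          fun q _ _ => log_natCast_nonneg q
    _ = Chebyshev.theta n := (Chebyshev.theta_eq_sum_primesLE_log n).symm
    _ ≤ log 4 * n := Chebyshev.theta_le_log4_mul_x n.cast_nonneg

theorem sum_primesBelow_mul_log_le_of_antitone {g : ℕ → ℝ} (hg : Antitone g)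
    (hg0 : ∀ n, 0 ≤ g n) (N : ℕ) :
    ∑ q ∈ Nat.primesBelow N, g q * log q ≤ log 4 * ∑ n ∈ range N, g n := by
  have key := sum_range_mul_le_of_antitone hg hg0
    (c := fun n => if n.Prime then log n else 0) (d := fun _ => log 4) (fun n => by
      simpa [← sum_filter, Nat.primesBelow, mul_comm] using sum_primesBelow_log_le n) N
  simpa [mul_ite, ← sum_filter, Nat.primesBelow, sum_mul, mul_comm] using key

theorem exp_neg_sq_log_sub_log_le {x y : ℝ} (hx : 0 < x) (hy : 0 < y) :
    exp (-(log x - log y) ^ 2 / 2) ≤ exp (1 / 2) * (x / y) := by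
  rw [← exp_log (div_pos hx hy), ← exp_add, exp_le_exp, log_div hx.ne' hy.ne']
  nlinarith [sq_nonneg (log x - log y + 1)]

theorem exp_neg_sq_log_sub_log_div_le {p q : ℝ} (hp : 1 ≤ p) (hq : 1 ≤ q) :
    exp (-(log q - log p) ^ 2 / 2) / q ≤ 6 * exp (1 / 2) * (p / ((q + p) * (q + p + 1))) := by
  have hp0 : 0 < p := by linarith
  have hq0 : 0 < q := by linarith
  have hE : 0 < exp (1 / 2) := exp_pos _
  rcases le_total q p with hqp | hpq
  · calc exp (-(log q - log p) ^ 2 / 2) / q ≤ exp (1 / 2) * (q / p) / q := by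
          gcongr; exact exp_neg_sq_log_sub_log_le hq0 hp0
      _ = exp (1 / 2) * (1 / p) := by field_simp
      _ ≤ 6 * exp (1 / 2) * (p / ((q + p) * (q + p + 1))) := by
        rw [mul_comm 6, mul_assoc]
        refine mul_le_mul_of_nonneg_left ?_ hE.le
        rw [mul_div_assoc', div_le_div_iff₀ hp0 (by positivity)]
        nlinarith
  · calc exp (-(log q - log p) ^ 2 / 2) / q ≤ exp (1 / 2) * (p / q) / q := by
          gcongr; rw [← neg_sub, neg_sq]; exact exp_neg_sq_log_sub_log_le hp0 hq0
      _ = exp (1 / 2) * (p / q ^ 2) := by field_simp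
      _ ≤ 6 * exp (1 / 2) * (p / ((q + p) * (q + p + 1))) := by
        rw [mul_comm 6, mul_assoc]
        refine mul_le_mul_of_nonneg_left ?_ hE.le
        have h : (q + p) * (q + p + 1) ≤ 6 * q ^ 2 := by nlinarith
        rw [mul_div_assoc', div_le_div_iff₀ (by positivity) (by positivity)]
        nlinarith [mul_le_mul_of_nonneg_left h hp0.le]

theorem sum_range_div_mul_add_one_le {p : ℝ} (hp : 0 < p) (N : ℕ) :
    ∑ n ∈ range N, p / ((n + p) * (n + p + 1)) ≤ 1 := by
  have h : ∀ n : ℕ, p / ((n + p) * (n + p + 1))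
      = p * ((fun k : ℕ => 1 / (k + p)) n - (fun k : ℕ => 1 / (k + p)) (n + 1)) := by
    intro n
    push_cast
    field_simp
    ring
  simp_rw [h, ← mul_sum, sum_range_sub']
  push_cast
  rw [zero_add, mul_sub, mul_one_div_cancel hp.ne']
  have : 0 ≤ p * (1 / (N + p)) := by positivity
  linarith

theorem sum_primes_exp_neg_sq_log_sub_log_mul_log_div_le {P : Finset ℕ} (hP : ∀ q ∈ P, q.Prime)
    {p : ℕ} (hp : 0 < p) :
    ∑ q ∈ P, exp (-(log q - log p) ^ 2 / 2) * (log q / q) ≤ 6 * exp (1 / 2) * log 4 := by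
  have hp1 : (1 : ℝ) ≤ p := by exact_mod_cast hp
  set g : ℕ → ℝ := fun n => 6 * exp (1 / 2) * (p / ((n + p) * (n + p + 1))) with hg
  have hg0 : ∀ n, 0 ≤ g n := fun n => by positivity
  have hg_anti : Antitone g := antitone_nat_of_succ_le fun n => by
    simp only [hg, Nat.cast_succ]
    gcongr <;> linarith
  have hPN : P ⊆ Nat.primesBelow (P.sup id + 1) := fun q hq => by
    rw [Nat.mem_primesBelow]
    exact ⟨Nat.lt_succ_of_le (le_sup (f := id) hq), hP q hq⟩
  calc ∑ q ∈ P, exp (-(log q - log p) ^ 2 / 2) * (log q / q)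
      ≤ ∑ q ∈ Nat.primesBelow (P.sup id + 1), exp (-(log q - log p) ^ 2 / 2) * (log q / q) :=
        sum_le_sum_of_subset_of_nonneg hPN fun q _ _ => by
          have := log_natCast_nonneg q; positivity
    _ ≤ ∑ q ∈ Nat.primesBelow (P.sup id + 1), g q * log q := by
        refine sum_le_sum fun q hq => ?_
        have hq1 : (1 : ℝ) ≤ q := by exact_mod_cast (Nat.prime_of_mem_primesBelow hq).one_le
        rw [mul_div_assoc', mul_div_right_comm]
        exact mul_le_mul_of_nonneg_right (exp_neg_sq_log_sub_log_div_le hp1 hq1)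
          (log_natCast_nonneg q)
    _ ≤ log 4 * ∑ n ∈ range (P.sup id + 1), g n :=
        sum_primesBelow_mul_log_le_of_antitone hg_anti hg0 _
    _ ≤ log 4 * (6 * exp (1 / 2)) := by
        rw [hg, ← mul_sum]
        exact mul_le_mul_of_nonneg_left (mul_le_of_le_one_right (by positivity)
          (sum_range_div_mul_add_one_le (by positivity) _)) (log_nonneg (by norm_num))
    _ = 6 * exp (1 / 2) * log 4 := mul_comm _ _

theorem mul_le_sq_div_mul_add_sq_div_mul {a b u v : ℝ} (hu : 0 < u) (hv : 0 < v) :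
    a * b ≤ (a ^ 2 / u * v + b ^ 2 / v * u) / 2 := by
  have h : a ^ 2 / u * v + b ^ 2 / v * u = (a * v - b * u) ^ 2 / (u * v) + 2 * (a * b) := by
    field_simp
    ring
  rw [h]
  have : 0 ≤ (a * v - b * u) ^ 2 / (u * v) := by positivity
  linarith

theorem sum_sum_mul_mul_le_of_symm {ι : Type*} (s : Finset ι) (y : ι → ℝ) {w : ι → ℝ}
    {K : ι → ι → ℝ} (hw : ∀ i ∈ s, 0 < w i) (hK : ∀ i j, 0 ≤ K i j)
    (hKs : ∀ i j, K i j = K j i) :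
    ∑ i ∈ s, ∑ j ∈ s, y i * y j * K i j ≤ ∑ i ∈ s, y i ^ 2 / w i * ∑ j ∈ s, K i j * w j := by
  calc ∑ i ∈ s, ∑ j ∈ s, y i * y j * K i j
      ≤ ∑ i ∈ s, ∑ j ∈ s, (y i ^ 2 / w i * (K i j * w j) + y j ^ 2 / w j * (K j i * w i)) / 2 :=
        sum_le_sum fun i hi => sum_le_sum fun j hj => by
          rw [hKs j i]
          have := mul_le_mul_of_nonneg_right
            (mul_le_sq_div_mul_add_sq_div_mul (a := y i) (b := y j) (hw i hi) (hw j hj)) (hK i j)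
          linarith
    _ = ∑ i ∈ s, y i ^ 2 / w i * ∑ j ∈ s, K i j * w j := by
        simp_rw [← sum_div, sum_add_distrib]
        rw [sum_comm (f := fun i j => y j ^ 2 / w j * (K j i * w i))]
        simp_rw [mul_sum]
        ring

theorem integral_exp_neg_sq_half_mul_cexp (c : ℝ) :
    ∫ x : ℝ, (exp (-x ^ 2 / 2) : ℂ) * Complex.exp (c * x * Complex.I)
      = (√(2 * π) * exp (-c ^ 2 / 2) : ℝ) := by
  have h := fourierIntegral_gaussian (b := 1 / 2) (by norm_num) c
  have hx : ∀ x : ℝ, (exp (-x ^ 2 / 2) : ℂ) * Complex.exp (c * x * Complex.I)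
      = Complex.exp (Complex.I * c * x) * Complex.exp (-(1 / 2) * x ^ 2) := by
    intro x
    rw [Complex.ofReal_exp, mul_comm]
    push_cast
    ring_nf
  simp_rw [hx, h]
  have hsqrt : ((π : ℂ) / (1 / 2)) ^ (1 / 2 : ℂ) = (√(2 * π) : ℝ) := by
    rw [sqrt_eq_rpow, Complex.ofReal_cpow (by positivity)]
    push_cast
    ring_nf
  rw [hsqrt]
  push_cast
  ring_nf

theorem integrable_exp_neg_sq_half_mul_cexp (c : ℝ) :
    Integrable fun x : ℝ => (exp (-x ^ 2 / 2) : ℂ) * Complex.exp (c * x * Complex.I) := by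
  have h := integrable_cexp_quadratic' (b := -1 / 2) (by norm_num) (c * Complex.I) 0
  refine h.congr (Filter.Eventually.of_forall fun x => ?_)
  beta_reduce
  rw [Complex.ofReal_exp, ← Complex.exp_add]
  push_cast
  ring_nf

section ExpSum

variable {ι : Type*} (s : Finset ι) (b : ι → ℂ) (ξ : ι → ℝ)

noncomputable def expSum (x : ℝ) : ℂ :=
  ∑ i ∈ s, b i * Complex.exp (ξ i * x * Complex.I)

theorem continuous_expSum : Continuous (expSum s b ξ) := by
  unfold expSum
  fun_prop

theorem ofReal_exp_neg_sq_half_mul_norm_expSum_sq (x : ℝ) :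
    ((exp (-x ^ 2 / 2) * ‖expSum s b ξ x‖ ^ 2 : ℝ) : ℂ)
      = ∑ i ∈ s, ∑ j ∈ s, b i * (starRingEnd ℂ) (b j)
          * ((exp (-x ^ 2 / 2) : ℂ) * Complex.exp ((ξ i - ξ j : ℝ) * x * Complex.I)) := by
  rw [Complex.ofReal_mul, Complex.ofReal_pow, ← Complex.mul_conj', expSum, map_sum, sum_mul_sum,
    mul_sum]
  refine sum_congr rfl fun i _ => ?_
  rw [mul_sum]
  refine sum_congr rfl fun j _ => ?_
  rw [map_mul, ← Complex.exp_conj, map_mul, map_mul, Complex.conj_ofReal, Complex.conj_ofReal,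
    Complex.conj_I]
  have : ((ξ i - ξ j : ℝ) : ℂ) * x * Complex.I = ξ i * x * Complex.I + ξ j * x * -Complex.I := by
    push_cast; ring
  rw [this, Complex.exp_add]
  ring

theorem integrable_exp_neg_sq_half_mul_norm_expSum_sq :
    Integrable fun x : ℝ => exp (-x ^ 2 / 2) * ‖expSum s b ξ x‖ ^ 2 := by
  have h : Integrable fun x : ℝ => ((exp (-x ^ 2 / 2) * ‖expSum s b ξ x‖ ^ 2 : ℝ) : ℂ) := by
    simp_rw [ofReal_exp_neg_sq_half_mul_norm_expSum_sq]
    exact integrable_finsetSum _ fun i _ => integrable_finsetSum _ fun j _ =>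
      (integrable_exp_neg_sq_half_mul_cexp _).const_mul _
  simpa only [RCLike.re_to_complex, Complex.ofReal_re] using h.re

theorem integral_exp_neg_sq_half_mul_norm_expSum_sq_le :
    ∫ x : ℝ, exp (-x ^ 2 / 2) * ‖expSum s b ξ x‖ ^ 2
      ≤ √(2 * π) * ∑ i ∈ s, ∑ j ∈ s, ‖b i‖ * ‖b j‖ * exp (-(ξ i - ξ j) ^ 2 / 2) := by
  have h : ((∫ x : ℝ, exp (-x ^ 2 / 2) * ‖expSum s b ξ x‖ ^ 2 : ℝ) : ℂ)
      = ∑ i ∈ s, ∑ j ∈ s, b i * (starRingEnd ℂ) (b j)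
          * (√(2 * π) * exp (-(ξ i - ξ j) ^ 2 / 2) : ℝ) := by
    rw [← integral_complex_ofReal]
    simp_rw [ofReal_exp_neg_sq_half_mul_norm_expSum_sq]
    rw [integral_finsetSum _ fun i _ => integrable_finsetSum _ fun j _ =>
      (integrable_exp_neg_sq_half_mul_cexp _).const_mul _]
    refine sum_congr rfl fun i _ => ?_
    rw [integral_finsetSum _ fun j _ => (integrable_exp_neg_sq_half_mul_cexp _).const_mul _]
    refine sum_congr rfl fun j _ => ?_
    rw [integral_const_mul, integral_exp_neg_sq_half_mul_cexp]
  have h0 : 0 ≤ ∫ x : ℝ, exp (-x ^ 2 / 2) * ‖expSum s b ξ x‖ ^ 2 :=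
    integral_nonneg fun x => by positivity
  rw [← Real.norm_of_nonneg h0, ← Complex.norm_real, h, mul_sum]
  refine (norm_sum_le _ _).trans (sum_le_sum fun i _ => ?_)
  rw [mul_sum]
  refine (norm_sum_le _ _).trans (le_of_eq (sum_congr rfl fun j _ => ?_))
  rw [norm_mul, norm_mul, Complex.norm_conj, Complex.norm_real, Real.norm_of_nonneg (by positivity)]
  ring

end ExpSum

theorem intervalIntegral_le_exp_half_mul_integral_exp_neg_sq {f : ℝ → ℝ} (hf : Continuous f)
    (hf0 : ∀ x, 0 ≤ f x) (hint : Integrable fun x => exp (-x ^ 2 / 2) * f x) :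
    ∫ x in (-1 : ℝ)..1, f x ≤ exp (1 / 2) * ∫ x, exp (-x ^ 2 / 2) * f x := by
  calc ∫ x in (-1 : ℝ)..1, f x ≤ ∫ x in (-1 : ℝ)..1, exp (1 / 2) * (exp (-x ^ 2 / 2) * f x) := by
        refine intervalIntegral.integral_mono_on (by norm_num) (hf.intervalIntegrable _ _)
          (Continuous.intervalIntegrable (by fun_prop) _ _) fun x hx => ?_
        have hx2 : x ^ 2 ≤ 1 := by nlinarith [hx.1, hx.2]
        have h1 : 1 ≤ exp (1 / 2) * exp (-x ^ 2 / 2) := by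
          rw [← exp_add]
          exact one_le_exp (by linarith)
        nlinarith [hf0 x]
    _ = exp (1 / 2) * ∫ x in (-1 : ℝ)..1, exp (-x ^ 2 / 2) * f x :=
        intervalIntegral.integral_const_mul _ _
    _ ≤ exp (1 / 2) * ∫ x, exp (-x ^ 2 / 2) * f x := by
        gcongr
        rw [intervalIntegral.integral_of_le (by norm_num)]
        exact setIntegral_le_integral hint (Filter.Eventually.of_forall fun x => by
          have := hf0 x; positivity)

theorem natCast_cpow_mul_I {n : ℕ} (hn : 0 < n) (t : ℝ) :
    (n : ℂ) ^ ((t : ℂ) * Complex.I) = Complex.exp (log n * t * Complex.I) := by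
  rw [Complex.cpow_def_of_ne_zero (by exact_mod_cast hn.ne'), Complex.natCast_log]
  ring_nf

theorem intervalIntegral_norm_sum_primes_div_cpow_sq_le {P : Finset ℕ} (hP : ∀ p ∈ P, p.Prime)
    (c : ℕ → ℂ) :
    ∫ t in (-1 : ℝ)..1, ‖∑ p ∈ P, c p / (p : ℂ) ^ ((t : ℂ) * Complex.I)‖ ^ 2
      ≤ 6 * exp 1 * √(2 * π) * log 4 * ∑ p ∈ P, ‖c p‖ ^ 2 * (p / log p) := by
  set D := expSum P c fun p => -log p
  have hDeq : ∀ t : ℝ, ∑ p ∈ P, c p / (p : ℂ) ^ ((t : ℂ) * Complex.I) = D t := fun t =>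
    sum_congr rfl fun p hp => by
      rw [natCast_cpow_mul_I (hP p hp).pos, div_eq_mul_inv, ← Complex.exp_neg]
      push_cast
      ring_nf
  have hw : ∀ p ∈ P, 0 < log p / p := fun p hp =>
    div_pos (log_pos (by exact_mod_cast (hP p hp).one_lt)) (by exact_mod_cast (hP p hp).pos)
  simp_rw [hDeq]
  calc ∫ t in (-1 : ℝ)..1, ‖D t‖ ^ 2 ≤ exp (1 / 2) * ∫ t, exp (-t ^ 2 / 2) * ‖D t‖ ^ 2 :=
        intervalIntegral_le_exp_half_mul_integral_exp_neg_sq ((continuous_expSum _ _ _).norm.pow 2)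
          (fun _ => by positivity) (integrable_exp_neg_sq_half_mul_norm_expSum_sq _ _ _)
    _ ≤ exp (1 / 2) * (√(2 * π) * ∑ p ∈ P, ∑ q ∈ P,
          ‖c p‖ * ‖c q‖ * exp (-(log q - log p) ^ 2 / 2)) := by
        refine mul_le_mul_of_nonneg_left ((integral_exp_neg_sq_half_mul_norm_expSum_sq_le P c
          (fun p => -log p)).trans_eq ?_) (exp_pos _).le
        simp only [neg_sub_neg]
    _ ≤ exp (1 / 2) * (√(2 * π) * ∑ p ∈ P, ‖c p‖ ^ 2 / (log p / p)
          * ∑ q ∈ P, exp (-(log q - log p) ^ 2 / 2) * (log q / q)) := by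
        refine mul_le_mul_of_nonneg_left (mul_le_mul_of_nonneg_left ?_ (sqrt_nonneg _))
          (exp_pos _).le
        exact sum_sum_mul_mul_le_of_symm P _ hw (fun _ _ => (exp_pos _).le)
          fun p q => by rw [← neg_sub, neg_sq]
    _ ≤ exp (1 / 2) * (√(2 * π) * ∑ p ∈ P, ‖c p‖ ^ 2 / (log p / p)
          * (6 * exp (1 / 2) * log 4)) := by
        gcongr with p hp
        exact sum_primes_exp_neg_sq_log_sub_log_mul_log_div_le hP (hP p hp).pos
    _ = 6 * exp 1 * √(2 * π) * log 4 * ∑ p ∈ P, ‖c p‖ ^ 2 * (p / log p) := by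
        have he : exp 1 = exp (1 / 2) * exp (1 / 2) := by rw [← exp_add]; norm_num
        rw [he, mul_sum, mul_sum, mul_sum]
        refine sum_congr rfl fun p _ => ?_
        rw [div_div_eq_mul_div]
        ring

theorem stmt5 :
    ∃ C : ℝ, 0 < C ∧ ∀ a : ℕ → ℂ, ∀ x : ℝ, 3 ≤ x →
      (∫ t in (-1 : ℝ)..1, (‖(∑ p ∈ (Finset.Icc 1 ⌊x⌋₊).filter
            (fun p : ℕ => p.Prime ∧ (Real.log x) ^ 4 ≤ (p : ℝ)),
          a p * (Real.log p : ℂ) / (p : ℂ) ^ (1 + (t : ℂ) * Complex.I))‖) ^ 2)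
      ≤ C * ∑ p ∈ (Finset.Icc 1 ⌊x⌋₊).filter
            (fun p : ℕ => p.Prime ∧ (Real.log x) ^ 4 ≤ (p : ℝ)),
          ‖a p‖ ^ 2 * Real.log p / p := by
  refine ⟨6 * exp 1 * √(2 * π) * log 4, by positivity, fun a x _ => ?_⟩
  set P := (Finset.Icc 1 ⌊x⌋₊).filter (fun p : ℕ => p.Prime ∧ (Real.log x) ^ 4 ≤ (p : ℝ))
  have hP : ∀ p ∈ P, p.Prime := fun p hp => (mem_filter.1 hp).2.1
  have hterm : ∀ t : ℝ, ∀ p ∈ P, a p * (Real.log p : ℂ) / (p : ℂ) ^ (1 + (t : ℂ) * Complex.I)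
      = a p * Real.log p / p / (p : ℂ) ^ ((t : ℂ) * Complex.I) := fun t p hp => by
    rw [Complex.cpow_add _ _ (by exact_mod_cast (hP p hp).ne_zero), Complex.cpow_one, div_div]
  have hweight : ∀ p ∈ P, ‖a p * Real.log p / p‖ ^ 2 * (p / Real.log p)
      = ‖a p‖ ^ 2 * Real.log p / p := fun p hp => by
    have hp0 : (0 : ℝ) < p := by exact_mod_cast (hP p hp).pos
    have hlog : 0 < Real.log p := log_pos (by exact_mod_cast (hP p hp).one_lt)
    rw [norm_div, norm_mul, Complex.norm_real, Complex.norm_natCast, norm_of_nonneg hlog.le]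
    field_simp
  simp_rw [fun t => sum_congr rfl (hterm t), ← sum_congr rfl hweight]
  exact intervalIntegral_norm_sum_primes_div_cpow_sq_le hP _
end
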